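/- arXiv:2303.00642 — 2 statements merged into one kernel-verified Lean document; each statement's English description precedes it below -/
import Mathlib

section
/- For P(x) = x(x - 1)(x + 1)(x - u) with u ∈ ℂ \ {0, ±1}, d = 6, and U(x) = x^2, the polynomial V(x) = -(U(u)/P'(u))·(P(x) - P'(u)(x - u))/(x - u)^2 + (1/6)·(U(u)/P'(u))·(P'(x) - P'(u))/(x - u) + (5/6)·(U(x) - U(u))/(x - u) (a polynomial after clearing the removable singularity at x = u) satisfies 6u(1 - u^2)·V(x) = u^2 + 5u·x + 2u^2·x^2. -/
open Polynomial

/-!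
For `P = X(X-1)(X+1)(X-u)` all three difference quotients in `V` are explicit polynomials in `x`,
because `u` is a root of `P` (so `(X-u)²` divides `P - P'(u)(X-u)`). Since `P'(u) = u(u²-1)`,
multiplying `V` by `6u(1-u²)` clears every denominator and leaves a polynomial identity.
-/

section Quartic

variable {K : Type*} [Field K]

lemma eval_quartic (u x : K) :
    (X * (X - 1) * (X + 1) * (X - C u) : K[X]).eval x = x ^ 4 - u * x ^ 3 - x ^ 2 + u * x := by
  simp only [eval_mul, eval_sub, eval_add, eval_X, eval_one, eval_C]
  ring

lemma eval_derivative_quartic (u x : K) :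
    (derivative (X * (X - 1) * (X + 1) * (X - C u) : K[X])).eval x =
      4 * x ^ 3 - 3 * u * x ^ 2 - 2 * x + u := by
  simp only [derivative_mul, derivative_X, derivative_sub, derivative_add, derivative_one,
    derivative_C, eval_mul, eval_sub, eval_add, eval_X, eval_one, eval_C, eval_zero]
  ring

lemma eval_derivative_quartic_self (u : K) :
    (derivative (X * (X - 1) * (X + 1) * (X - C u) : K[X])).eval u = u * (u ^ 2 - 1) := by
  rw [eval_derivative_quartic]
  ring

lemma quartic_taylor_remainder_div {u x : K} (hx : x ≠ u) :
    (x ^ 4 - u * x ^ 3 - x ^ 2 + u * x - u * (u ^ 2 - 1) * (x - u)) / (x - u) ^ 2 =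
      x ^ 2 + u * x + u ^ 2 - 1 := by
  rw [div_eq_iff (pow_ne_zero 2 (sub_ne_zero.mpr hx))]
  ring

lemma derivative_quartic_slope {u x : K} (hx : x ≠ u) :
    (4 * x ^ 3 - 3 * u * x ^ 2 - 2 * x + u - u * (u ^ 2 - 1)) / (x - u) =
      4 * x ^ 2 + u * x + u ^ 2 - 2 := by
  rw [div_eq_iff (sub_ne_zero.mpr hx)]
  ring

lemma sq_sub_sq_div_sub {u x : K} (hx : x ≠ u) :
    (x ^ 2 - u ^ 2) / (x - u) = x + u := by
  rw [sq_sub_sq, mul_div_assoc, div_self (sub_ne_zero.mpr hx), mul_one]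

lemma sq_sub_one_ne_zero {u : K} (hu1 : u ≠ 1) (hum1 : u ≠ -1) : u ^ 2 - 1 ≠ 0 :=
  sub_ne_zero.mpr fun h => (sq_eq_one_iff.mp h).elim hu1 hum1

end Quartic

/-- For `P(x) = x(x-1)(x+1)(x-u)`, `d = 6`, `U(x) = x²`, the Gauss–Manin
formula satisfies `6u(1-u²)·V(x) = u² + 5u·x + 2u²·x²` (identity for `x ≠ u`,
the singularity at `x = u` being removable). -/
theorem stmt5 (u : ℂ) (hu0 : u ≠ 0) (hu1 : u ≠ 1) (hum1 : u ≠ -1)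
    (P : Polynomial ℂ) (hP : P = X * (X - 1) * (X + 1) * (X - C u))
    (x : ℂ) (hx : x ≠ u) :
    6 * u * (1 - u ^ 2) *
      (-(u ^ 2 / P.derivative.eval u)
          * ((P.eval x - P.derivative.eval u * (x - u)) / (x - u) ^ 2)
        + (1 / 6) * (u ^ 2 / P.derivative.eval u)
          * ((P.derivative.eval x - P.derivative.eval u) / (x - u))
        + (5 / 6) * ((x ^ 2 - u ^ 2) / (x - u))) =
      u ^ 2 + 5 * u * x + 2 * u ^ 2 * x ^ 2 := by
  subst hP
  rw [eval_quartic, eval_derivative_quartic_self, eval_derivative_quartic u x,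
    quartic_taylor_remainder_div hx, derivative_quartic_slope hx, sq_sub_sq_div_sub hx]
  have hu2 := sq_sub_one_ne_zero hu1 hum1
  field_simp
  ring
end

section
/- Consider the connection matrix A(u) = (1/(6u(1-u^2))) · [[5u^2 - 4, u, u^2], [5u, 5u^2, 5u], [2, 2u, 2u^2]] acting on ℂ^3, and the vector e = (0, 0, 1)^T. Then for generic u ∈ ℂ \ {0, ±1} (indeed for all but finitely many u), the three vectors e, A(u)e, and (A'(u) + A(u)^2)e are linearly independent in ℂ^3, where A'(u) denotes the entrywise derivative in u. -/
/-!
Since `e` is the last standard basis vector, `e, a, b` are independent exactly when the minor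
`a₀ b₁ - a₁ b₀` is nonzero. Here `A(u)e` is the last column `(u², 5u, 2u²) / D` of `A(u)`, with
`D = 6u(1 - u²)`, and a direct computation gives the minor `-35 / (216 (1 - u²)²)` for
`(A' + A²)e`. This never vanishes off `{0, ±1}`, so `S = ∅` works.
-/

open Matrix

/-- The Gauss–Manin connection matrix for the family `y⁶ = x(x-1)(x+1)(x-u)`
in the basis `xᵏ dx/y⁵`, `k = 0,1,2`. -/
noncomputable def Aconn (u : ℂ) : Matrix (Fin 3) (Fin 3) ℂ :=
  (1 / (6 * u * (1 - u ^ 2))) •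
    !![5 * u ^ 2 - 4, u, u ^ 2; 5 * u, 5 * u ^ 2, 5 * u; 2, 2 * u, 2 * u ^ 2]

theorem linearIndependent_vecCons_e₂_iff {K : Type*} [Field K] (a b : Fin 3 → K) :
    LinearIndependent K ![![0, 0, 1], a, b] ↔ a 0 * b 1 - a 1 * b 0 ≠ 0 := by
  have hdet : (Matrix.of ![![0, 0, 1], a, b]).det = a 0 * b 1 - a 1 * b 0 := by
    simp [det_fin_three]
  rw [← hdet, ← isUnit_iff_ne_zero, ← isUnit_iff_isUnit_det,
    ← linearIndependent_rows_iff_isUnit]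
  rfl

theorem mulVec_e₂ {m R : Type*} [NonAssocSemiring R] (M : Matrix m (Fin 3) R) :
    M *ᵥ ![0, 0, 1] = fun i => M i 2 := by
  ext i
  simp [mulVec, dotProduct, Fin.sum_univ_three]

theorem Aconn_apply_two (u : ℂ) (i : Fin 3) :
    Aconn u i 2 = ![u ^ 2, 5 * u, 2 * u ^ 2] i / (6 * u * (1 - u ^ 2)) := by
  fin_cases i <;> simp [Aconn, div_eq_inv_mul]

theorem hasDerivAt_Aconn_apply_two {u : ℂ} (hu : 6 * u * (1 - u ^ 2) ≠ 0) (i : Fin 3) :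
    HasDerivAt (fun v => Aconn v i 2)
      ((![2 * u, 5, 4 * u] i * (6 * u * (1 - u ^ 2))
          - ![u ^ 2, 5 * u, 2 * u ^ 2] i * (6 - 18 * u ^ 2)) / (6 * u * (1 - u ^ 2)) ^ 2) u := by
  have hden : HasDerivAt (fun v : ℂ => 6 * v * (1 - v ^ 2)) (6 - 18 * u ^ 2) u := by
    refine (((hasDerivAt_id u).const_mul 6).mul ((hasDerivAt_pow 2 u).const_sub 1)).congr_deriv ?_
    simp only [id_eq, Nat.cast_ofNat, Nat.add_one_sub_one, pow_one]
    ring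
  simp only [Aconn_apply_two]
  refine HasDerivAt.div ?_ hden hu
  fin_cases i
  · simpa using hasDerivAt_pow 2 u
  · simpa using (hasDerivAt_id u).const_mul 5
  · refine ((hasDerivAt_pow 2 u).const_mul 2).congr_deriv ?_
    simp only [Nat.cast_ofNat, Nat.add_one_sub_one, pow_one, Nat.succ_eq_add_one, Nat.reduceAdd,
      Fin.reduceFinMk, cons_val]
    ring

theorem Aconn_sq_apply_two (u : ℂ) (i : Fin 3) :
    (Aconn u ^ 2) i 2 =
      ![7 * u ^ 4 + u ^ 2, 40 * u ^ 3, 12 * u ^ 2 + 4 * u ^ 4] i / (6 * u * (1 - u ^ 2)) ^ 2 := by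
  rw [Aconn, smul_pow, Matrix.smul_apply, smul_eq_mul, _root_.one_div_pow, one_div_mul_eq_div]
  congr 1
  fin_cases i <;>
    simp only [sq, mul_apply, Fin.sum_univ_three, of_apply, cons_val', cons_val_fin_one, cons_val,
      cons_val_zero, cons_val_one, Fin.zero_eta, Fin.mk_one, Fin.reduceFinMk, Fin.isValue] <;> ring

theorem Aconn_minor_eq {u : ℂ} (hu : 6 * u * (1 - u ^ 2) ≠ 0) :
    (Aconn u *ᵥ ![0, 0, 1]) 0
          * (((of fun i j => deriv (fun v => Aconn v i j) u) + Aconn u ^ 2) *ᵥ ![0, 0, 1]) 1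
        - (Aconn u *ᵥ ![0, 0, 1]) 1
          * (((of fun i j => deriv (fun v => Aconn v i j) u) + Aconn u ^ 2) *ᵥ ![0, 0, 1]) 0
      = -35 / (216 * (1 - u ^ 2) ^ 2) := by
  have hu₀ : u ≠ 0 := by rintro rfl; simp at hu
  have hu₁ : 1 - u ^ 2 ≠ 0 := by rintro h; simp [h] at hu
  simp only [mulVec_e₂, Matrix.add_apply, of_apply, (hasDerivAt_Aconn_apply_two hu _).deriv]
  simp only [Aconn_apply_two, Aconn_sq_apply_two, Fin.isValue, cons_val_zero, cons_val_one]
  field_simp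
  ring

/-- For all but finitely many `u ∈ ℂ \ {0, ±1}`, the vectors `e`, `A(u)e` and
`(A'(u) + A(u)²)e` are linearly independent in `ℂ³`, where `e = (0,0,1)ᵀ` and
`A'(u)` is the entrywise derivative of `A` at `u`. -/
theorem stmt6 :
    ∃ S : Finset ℂ, ∀ u : ℂ, u ∉ S → u ≠ 0 → u ≠ 1 → u ≠ -1 →
      LinearIndependent ℂ
        ![(![0, 0, 1] : Fin 3 → ℂ),
          Aconn u *ᵥ ![0, 0, 1],
          ((Matrix.of fun i j => deriv (fun v => Aconn v i j) u) + Aconn u ^ 2) *ᵥ ![0, 0, 1]] := by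
  refine ⟨∅, fun u _ h0 h1 h2 => ?_⟩
  have hq : 1 - u ^ 2 ≠ 0 := sub_ne_zero.2 (Ne.symm (sq_ne_one_iff.2 ⟨h1, h2⟩))
  rw [linearIndependent_vecCons_e₂_iff, Aconn_minor_eq (by simp [h0, hq])]
  exact div_ne_zero (by norm_num) (by simp [hq])
end
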